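/- Let Y and V be finite nonempty types. Let w : V → ℝ be nonnegative with Σ_{v∈V} w(v) = 1 (the distribution p(x_i | x_S) of the candidate feature's value given the observed features), let q : Y → ℝ be strictly positive (the sub-model prediction p(ŷ | x_S)), for each v ∈ V let q_v : Y → ℝ be strictly positive (the prediction p(ŷ | x_S, x_i = v)), and let p : Y → ℝ be strictly positive (the global-model prediction p(ŷ | x)). Suppose there is a constant c > 0 such that p(y) = c · q_v(y) for all v ∈ V and all y ∈ Y. Define Δu(v) = KL(p‖q_v) − KL(p‖q), where KL(p‖q) = Σ_y p(y) log(p(y)/q(y)), and define the conditional mutual information I = Σ_{v∈V} w(v) Σ_{y∈Y} q_v(y) · log(q_v(y)/q(y)). Then − Σ_{v∈V} w(v) · Δu(v) = c · I. (This is the paper's Proposition in Appendix A: under the proportionality assumption p(ŷ|x) ∝ p(ŷ|x_S, x_i), the expected reduction in aleatoric uncertainty is proportional to the conditional mutual information I(x_i; ŷ | x_S).) -/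
import Mathlib


open scoped BigOperators

/-- Kullback–Leibler divergence between two (positive) functions on a finite type. -/
noncomputable def KL {Y : Type*} [Fintype Y] (p q : Y → ℝ) : ℝ :=
  ∑ y, p y * Real.log (p y / q y)

/-- Appendix A, Proposition: under proportionality `p = c • q_v`, the expected reduction
in aleatoric uncertainty equals `c` times the conditional mutual information. -/
theorem expected_kl_reduction_propto_cmi {Y V : Type*}
    [Fintype Y] [Fintype V] [Nonempty Y] [Nonempty V]
    (w : V → ℝ) (hw : ∀ v, 0 ≤ w v) (hw1 : ∑ v, w v = 1)
    (q : Y → ℝ) (hq : ∀ y, 0 < q y)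
    (qv : V → Y → ℝ) (hqv : ∀ v y, 0 < qv v y)
    (p : Y → ℝ) (hp : ∀ y, 0 < p y)
    (c : ℝ) (hc : 0 < c) (hprop : ∀ v y, p y = c * qv v y) :
    - ∑ v, w v * (KL p (qv v) - KL p q) =
      c * ∑ v, w v * ∑ y, qv v y * Real.log (qv v y / q y) := by
  have key : ∀ v, KL p (qv v) - KL p q =
      -(c * ∑ y, qv v y * Real.log (qv v y / q y)) := by
    intro v
    unfold KL
    rw [← Finset.sum_sub_distrib, Finset.mul_sum, ← Finset.sum_neg_distrib]
    apply Finset.sum_congr rfl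
    intro y _
    have h1 := hp y
    have h2 := hq y
    have h3 := hqv v y
    rw [← mul_sub, ← Real.log_div (by positivity) (by positivity)]
    have : p y / qv v y / (p y / q y) = q y / qv v y := by
      field_simp
    rw [this, hprop v y]
    rw [Real.log_div (by positivity) (by positivity),
        Real.log_div (by positivity) (by positivity)]
    ring
  rw [← Finset.sum_neg_distrib, Finset.mul_sum]
  apply Finset.sum_congr rfl
  intro v _
  rw [key v]
  ring
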